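/- Suppose α ∈ S satisfies c_α = 2 and ⟨α, θ^∨⟩ = 1. Then μ(α) = {θ}, i.e. the highest root θ is the unique positive root whose α-coefficient equals c_α = 2. (This is the claim of Theorem 6.7 that in types G₂, F₄, E₈ the set μ(α) is the singleton {α_max}, so that the fiber of π is SL(α_max)/B(α_max) ≅ P¹.) -/

import Mathlib

/-!
An abstract based (reduced, irreducible, crystallographic) root system:
`Φ` is the set of roots in a real vector space `V`, `S` is a base (set of
simple roots), `coeff r β` is the integer coefficient `x_β(r)` of the simple
root `β` in the expression of the root `r` in the base, `pairing r s` is the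
integer `⟨r, s^∨⟩` (pairing of the root `r` with the coroot of the root `s`),
and `highest` is the highest root `θ = Σ_{β ∈ S} c_β • β`, characterized by
the fact that `θ - r` is a nonnegative integer combination of `S` for every
root `r` (field `highest_le`); irreducibility is recorded through the fact
that every coefficient of the highest root is positive (`highest_coeff_pos`).
-/
structure BasedRootData (V : Type*) [AddCommGroup V] [Module ℝ V] where
  Φ : Set V
  S : Finset V
  coeff : V → V → ℤ
  pairing : V → V → ℤ
  S_subset : (S : Set V) ⊆ Φ
  finite : Φ.Finite
  root_ne_zero : ∀ r ∈ Φ, r ≠ (0 : V)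
  neg_mem : ∀ r ∈ Φ, -r ∈ Φ
  indep : LinearIndependent ℝ (fun β : S => (β : V))
  span_root : ∀ r ∈ Φ, r = ∑ β ∈ S, (coeff r β : ℝ) • (β : V)
  coeff_sign : ∀ r ∈ Φ, (∀ β ∈ S, 0 ≤ coeff r β) ∨ (∀ β ∈ S, coeff r β ≤ 0)
  coeff_neg : ∀ r ∈ Φ, ∀ β ∈ S, coeff (-r) β = - coeff r β
  coeff_simple_self : ∀ β ∈ S, coeff β β = 1
  coeff_simple_ne : ∀ β ∈ S, ∀ γ ∈ S, γ ≠ β → coeff β γ = 0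
  pairing_self : ∀ r ∈ Φ, pairing r r = 2
  pairing_linear : ∀ r ∈ Φ, ∀ s ∈ Φ, pairing r s = ∑ β ∈ S, coeff r β * pairing β s
  reflect_mem : ∀ r ∈ Φ, ∀ s ∈ Φ, r - (pairing r s) • s ∈ Φ
  highest : V
  highest_mem : highest ∈ Φ
  highest_le : ∀ r ∈ Φ, ∀ β ∈ S, coeff r β ≤ coeff highest β
  highest_coeff_pos : ∀ β ∈ S, 0 < coeff highest β

namespace BasedRootData

variable {V : Type*} [AddCommGroup V] [Module ℝ V]

/-- The set `Φ⁺` of positive roots: roots all of whose coefficients in the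
base are nonnegative. -/
def Pos (B : BasedRootData V) : Set V :=
  {r ∈ B.Φ | ∀ β ∈ B.S, 0 ≤ B.coeff r β}

/-- The set `Φ⁻` of negative roots: roots all of whose coefficients in the
base are nonpositive. -/
def Neg (B : BasedRootData V) : Set V :=
  {r ∈ B.Φ | ∀ β ∈ B.S, B.coeff r β ≤ 0}

/-- `μ(α)`: the set of positive roots whose coefficient at the simple root
`α` equals the coefficient `c_α` of `α` in the highest root. -/
def mu (B : BasedRootData V) (α : V) : Set V :=
  {r ∈ B.Pos | B.coeff r α = B.coeff B.highest α}

end BasedRootData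

/-!
A positive root `r` with `x_α(r) = 2` pairs with the coroot of `θ` to at least
`x_α(r) ⟨α, θ^∨⟩ = 2`, because simple roots pair nonnegatively with `θ^∨`. On the
other hand, if `p := ⟨r, θ^∨⟩ ≥ 2` then the root `p θ - r` has coefficients
`p c_β - x_β(r) ≥ 2 c_β - x_β(r) ≥ c_β`, and maximality of `θ` forces `x_β(r) = c_β`
for every `β`, i.e. `r = θ`.
-/

namespace BasedRootData

variable {V : Type*} [AddCommGroup V] [Module ℝ V] (B : BasedRootData V)

lemma coeff_eq_of_eq_sum {r : V} (hr : r ∈ B.Φ) (g : V → ℤ)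
    (h : r = ∑ β ∈ B.S, (g β : ℝ) • β) {β : V} (hβ : β ∈ B.S) : B.coeff r β = g β := by
  have hsum : ∑ γ : B.S, ((B.coeff r γ - g γ : ℤ) : ℝ) • (γ : V) = 0 := by
    rw [Finset.sum_coe_sort B.S (fun γ => ((B.coeff r γ - g γ : ℤ) : ℝ) • γ)]
    push_cast
    simp only [sub_smul, Finset.sum_sub_distrib]
    rw [← B.span_root r hr, ← h, sub_self]
  have hzero := Fintype.linearIndependent_iff.mp B.indep _ hsum ⟨β, hβ⟩
  exact sub_eq_zero.mp (by exact_mod_cast hzero)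

lemma coeff_sub_pairing_smul {r s : V} (hr : r ∈ B.Φ) (hs : s ∈ B.Φ) {β : V} (hβ : β ∈ B.S) :
    B.coeff (r - B.pairing r s • s) β = B.coeff r β - B.pairing r s * B.coeff s β := by
  refine B.coeff_eq_of_eq_sum (B.reflect_mem r hr s hs)
    (fun γ => B.coeff r γ - B.pairing r s * B.coeff s γ) ?_ hβ
  -- keeps the `conv` below from rewriting `r` and `s` inside the pairing
  set p := B.pairing r s
  conv_lhs => rw [B.span_root r hr, B.span_root s hs]
  rw [Finset.smul_sum, ← Finset.sum_sub_distrib]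
  refine Finset.sum_congr rfl fun γ _ => ?_
  rw [← Int.cast_smul_eq_zsmul ℝ, smul_smul]
  push_cast
  rw [← sub_smul]

lemma eq_highest_of_forall_coeff_le {r : V} (hr : r ∈ B.Φ)
    (h : ∀ β ∈ B.S, B.coeff B.highest β ≤ B.coeff r β) : r = B.highest := by
  rw [B.span_root r hr, B.span_root B.highest B.highest_mem]
  refine Finset.sum_congr rfl fun β hβ => ?_
  rw [le_antisymm (B.highest_le r hr β hβ) (h β hβ)]

lemma pairing_simple_highest_nonneg {β : V} (hβ : β ∈ B.S) : 0 ≤ B.pairing β B.highest := by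
  have hle := B.highest_le _ (B.reflect_mem β (B.S_subset hβ) B.highest B.highest_mem) β hβ
  rw [B.coeff_sub_pairing_smul (B.S_subset hβ) B.highest_mem hβ, B.coeff_simple_self β hβ] at hle
  nlinarith [B.highest_coeff_pos β hβ]

lemma coeff_mul_pairing_le_pairing_highest {r : V} (hr : r ∈ B.Pos) {α : V} (hα : α ∈ B.S) :
    B.coeff r α * B.pairing α B.highest ≤ B.pairing r B.highest := by
  rw [B.pairing_linear r hr.1 B.highest B.highest_mem]
  exact Finset.single_le_sum (f := fun γ => B.coeff r γ * B.pairing γ B.highest)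
    (fun γ hγ => mul_nonneg (hr.2 γ hγ) (B.pairing_simple_highest_nonneg hγ)) hα

lemma pairing_highest_le_one {r : V} (hr : r ∈ B.Φ) (hne : r ≠ B.highest) :
    B.pairing r B.highest ≤ 1 := by
  by_contra! hp
  refine hne (B.eq_highest_of_forall_coeff_le hr fun β hβ => ?_)
  have hroot := B.reflect_mem r hr B.highest B.highest_mem
  have hle := B.highest_le _ (B.neg_mem _ hroot) β hβ
  rw [B.coeff_neg _ hroot β hβ,
    B.coeff_sub_pairing_smul hr B.highest_mem hβ] at hle
  nlinarith [B.highest_coeff_pos β hβ]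

lemma highest_mem_mu (α : V) : B.highest ∈ B.mu α :=
  ⟨⟨B.highest_mem, fun β hβ => (B.highest_coeff_pos β hβ).le⟩, rfl⟩

end BasedRootData

/-- suppose `α ∈ S` satisfies `c_α = 2` and `⟨α, θ^∨⟩ = 1`.
Then `μ(α) = {θ}`: the highest root is the unique positive root whose
`α`-coefficient equals `c_α = 2`. -/
theorem statement7 {V : Type*} [AddCommGroup V] [Module ℝ V] (B : BasedRootData V)
    (α : V) (hα : α ∈ B.S) (hc : B.coeff B.highest α = 2)
    (hp : B.pairing α B.highest = 1) :
    B.mu α = {B.highest} := by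
  refine Set.eq_singleton_iff_unique_mem.mpr ⟨B.highest_mem_mu α, fun r hr => ?_⟩
  by_contra hne
  have hlower := B.coeff_mul_pairing_le_pairing_highest hr.1 hα
  rw [hr.2, hc, hp] at hlower
  have hupper := B.pairing_highest_le_one hr.1.1 hne
  omega
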